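/- Let H = H(2) be the 7×7 toy matrix at the exceptional coupling g = 2, and let M = H − 7·I. Then M⁴ = 0, M³ ≠ 0, and rank(M) = 5; consequently the eigenvalue 7 has algebraic multiplicity 7 and geometric multiplicity 2. -/

import Mathlib

/-! Writing `M = H₂ - 7`, one computes `M²` explicitly and finds `(M²)² = 0`, so `H₂` has the
single eigenvalue 7. On the kernel of `M`, the rows of `M` determine every coordinate from
coordinates 1 and 2, so the kernel has dimension at most 2; two explicit independent kernel vectors
give equality, and rank–nullity gives rank 5. -/

open Matrix Real Polynomial

noncomputable def H2 : Matrix (Fin 7) (Fin 7) ℝ :=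
  !![1, 0, 2 * Real.sqrt 3, 0, 0, 0, 0;
     0, 3, 0, 2 * Real.sqrt 2, 0, 0, 0;
     -(2 * Real.sqrt 3), 0, 5, 0, 4, 0, 0;
     0, -(2 * Real.sqrt 2), 0, 7, 0, 2 * Real.sqrt 2, 0;
     0, 0, -4, 0, 9, 0, 2 * Real.sqrt 3;
     0, 0, 0, -(2 * Real.sqrt 2), 0, 11, 0;
     0, 0, 0, 0, -(2 * Real.sqrt 3), 0, 13]

noncomputable def M6 : Matrix (Fin 7) (Fin 7) ℝ := H2 - (7 : ℝ) • 1

theorem Matrix.charpoly_eq_X_sub_C_pow_of_isNilpotent_sub_scalar {R n : Type*} [CommRing R]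
    [IsDomain R] [Fintype n] [DecidableEq n] {A : Matrix n n R} {c : R}
    (h : IsNilpotent (A - scalar n c)) : A.charpoly = (X - C c) ^ Fintype.card n := by
  have hshift : A.charpoly.comp (X + C c) = X ^ Fintype.card n := by
    rw [← charpoly_sub_scalar]
    exact sub_eq_zero.mp (isNilpotent_charpoly_sub_pow_of_isNilpotent h).eq_zero
  calc A.charpoly = (A.charpoly.comp (X + C c)).comp (X - C c) := by
        simp [comp_assoc]
    _ = (X - C c) ^ Fintype.card n := by rw [hshift, X_pow_comp]

theorem Matrix.rank_add_finrank_ker_mulVecLin {K m n : Type*} [Field K] [Fintype n]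
    (A : Matrix m n K) :
    A.rank + Module.finrank K (LinearMap.ker A.mulVecLin) = Fintype.card n := by
  rw [rank, LinearMap.finrank_range_add_finrank_ker, Module.finrank_fintype_fun_eq_card]

theorem Submodule.finrank_le_card_of_forall_comp_eq_zero {K ι κ : Type*} [Field K] [Fintype κ]
    (W : Submodule K (ι → K)) (f : κ → ι) (h : ∀ x ∈ W, x ∘ f = 0 → x = 0) :
    Module.finrank K W ≤ Fintype.card κ := by
  have hinj : Function.Injective (LinearMap.funLeft K K f ∘ₗ W.subtype) := by
    rw [← LinearMap.ker_eq_bot, LinearMap.ker_eq_bot']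
    rintro ⟨x, hx⟩ hxf
    exact Subtype.ext (h x hx hxf)
  simpa using LinearMap.finrank_le_finrank_of_injective hinj

lemma M6_eq : M6 =
    !![-6, 0, 2 * √3, 0, 0, 0, 0;
       0, -4, 0, 2 * √2, 0, 0, 0;
       -(2 * √3), 0, -2, 0, 4, 0, 0;
       0, -(2 * √2), 0, 0, 0, 2 * √2, 0;
       0, 0, -4, 0, 2, 0, 2 * √3;
       0, 0, 0, -(2 * √2), 0, 4, 0;
       0, 0, 0, 0, -(2 * √3), 0, 6] := by
  ext i j
  fin_cases i <;> fin_cases j <;> norm_num [M6, H2, one_apply]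

lemma M6_sq : M6 ^ 2 =
    !![24, 0, -(16 * √3), 0, 8 * √3, 0, 0;
       0, 8, 0, -(8 * √2), 0, 8, 0;
       16 * √3, 0, -24, 0, 0, 0, 8 * √3;
       0, 8 * √2, 0, -16, 0, 8 * √2, 0;
       8 * √3, 0, 0, 0, -24, 0, 16 * √3;
       0, 8, 0, -(8 * √2), 0, 8, 0;
       0, 0, 8 * √3, 0, -(16 * √3), 0, 24] := by
  have h2 : √2 * √2 = 2 := mul_self_sqrt (by norm_num)
  have h3 : √3 * √3 = 3 := mul_self_sqrt (by norm_num)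
  rw [M6_eq, sq]
  ext i j
  fin_cases i <;> fin_cases j <;> simp [mul_apply, Fin.sum_univ_succ] <;> grind

lemma M6_pow_four : M6 ^ 4 = 0 := by
  have h2 : √2 * √2 = 2 := mul_self_sqrt (by norm_num)
  have h3 : √3 * √3 = 3 := mul_self_sqrt (by norm_num)
  rw [show 4 = 2 * 2 from rfl, pow_mul, M6_sq, sq]
  ext i j
  fin_cases i <;> fin_cases j <;> simp [mul_apply, Fin.sum_univ_succ] <;> grind

lemma M6_pow_three_ne_zero : M6 ^ 3 ≠ 0 := by
  have h3 : √3 * √3 = 3 := mul_self_sqrt (by norm_num)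
  intro h
  have h00 := congrFun₂ h 0 0
  rw [pow_succ, M6_sq, M6_eq] at h00
  simp [mul_apply, Fin.sum_univ_succ] at h00
  grind

lemma eq_zero_of_M6_mulVec_eq_zero {x : Fin 7 → ℝ} (hx : M6 *ᵥ x = 0)
    (h12 : x ∘ ![1, 2] = 0) : x = 0 := by
  have h1 : x 1 = 0 := congrFun h12 0
  have h2 : x 2 = 0 := congrFun h12 1
  have hs2 : √2 ≠ 0 := by positivity
  have hs3 : √3 ≠ 0 := by positivity
  have row : ∀ i, (M6 *ᵥ x) i = 0 := fun i => congrFun hx i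
  have r0 := row 0; have r1 := row 1; have r2 := row 2; have r3 := row 3; have r6 := row 6
  simp [M6_eq, mulVec, dotProduct, Fin.sum_univ_succ, h1, h2] at r0 r1 r2 r3 r6
  have h0 : x 0 = 0 := by linarith
  have h4 : x 4 = 0 := by grind
  ext i
  fin_cases i <;> simp <;> grind

lemma M6_mulVec_kernel_vectors :
    M6 *ᵥ ![0, 1, 0, √2, 0, 1, 0] = 0 ∧ M6 *ᵥ ![√3, 0, 3, 0, 3, 0, √3] = 0 := by
  have h2 : √2 * √2 = 2 := mul_self_sqrt (by norm_num)
  have h3 : √3 * √3 = 3 := mul_self_sqrt (by norm_num)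
  constructor <;> ext i <;> fin_cases i <;>
    simp [M6_eq, mulVec, dotProduct, Fin.sum_univ_succ] <;> grind

lemma finrank_ker_M6 : Module.finrank ℝ (LinearMap.ker M6.mulVecLin) = 2 := by
  refine le_antisymm ?_ ?_
  · exact (Submodule.finrank_le_card_of_forall_comp_eq_zero _ ![1, 2]
      fun x hx => eq_zero_of_M6_mulVec_eq_zero hx).trans_eq (Fintype.card_fin 2)
  · set v : Fin 2 → Fin 7 → ℝ := ![![0, 1, 0, √2, 0, 1, 0], ![√3, 0, 3, 0, 3, 0, √3]]
    have hv : LinearIndependent ℝ v := by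
      refine LinearIndependent.pair_iff.mpr fun s t hst => ?_
      have h1 := congrFun hst 1
      have h2 := congrFun hst 2
      simp at h1 h2
      exact ⟨h1, h2⟩
    have hspan : Submodule.span ℝ (Set.range v) ≤ LinearMap.ker M6.mulVecLin := by
      rw [Submodule.span_le, Set.range_subset_iff]
      intro k
      fin_cases k
      exacts [M6_mulVec_kernel_vectors.1, M6_mulVec_kernel_vectors.2]
    simpa [finrank_span_eq_card hv] using Submodule.finrank_mono hspan

lemma rank_M6 : M6.rank = 5 := by
  have := M6.rank_add_finrank_ker_mulVecLin
  rw [finrank_ker_M6, Fintype.card_fin] at this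
  omega

lemma charpoly_H2 : H2.charpoly = (X - C 7) ^ 7 := by
  have hM6 : M6 = H2 - scalar (Fin 7) 7 := by
    rw [M6, scalar_apply, smul_one_eq_diagonal]
  rw [charpoly_eq_X_sub_C_pow_of_isNilpotent_sub_scalar ⟨4, hM6 ▸ M6_pow_four⟩, Fintype.card_fin]

theorem stmt_6 :
    M6 ^ 4 = 0 ∧ M6 ^ 3 ≠ 0 ∧ M6.rank = 5 ∧
    H2.charpoly = (X - C 7) ^ 7 ∧
    Module.finrank ℝ ↥(LinearMap.ker M6.mulVecLin) = 2 :=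
  ⟨M6_pow_four, M6_pow_three_ne_zero, rank_M6, charpoly_H2, finrank_ker_M6⟩
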